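/- Let V be a finite set, (K_i)_{i≥1} a sequence of Markov kernels on V, μ_0 a positive probability measure with all μ_n = μ_0K_1⋯K_n positive. For each i let P_i = K_i^*K_i where K_i^* is the adjoint of K_i : ℓ²(μ_i) → ℓ²(μ_{i−1}), let l(P_i) be the logarithmic Sobolev constant of P_i with respect to μ_i, and let σ₁(K_i,μ_{i−1}) be the second largest singular value of K_i : ℓ²(μ_i) → ℓ²(μ_{i−1}). Fix x ∈ V, and suppose m ∈ ℕ satisfies Σ_{i=1}^m log(1+l(P_i)) ≥ log log(μ_0(x)^{−1/2}). Then for all n ≥ m, d₂(K_{0,n}(x,·),μ_n)² ≤ e² · ∏_{i=m+1}^n σ₁(K_i,μ_{i−1})². -/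

import Mathlib

open Finset

noncomputable section

namespace TimeInhomog

variable {V : Type*} [Fintype V] [DecidableEq V]

/-- A (row-stochastic) Markov kernel on a finite set `V`. -/
def IsKernel (K : V → V → ℝ) : Prop :=
  (∀ x y, 0 ≤ K x y) ∧ ∀ x, ∑ y, K x y = 1

/-- Action of a kernel on a measure: `(μK)(y) = ∑ₓ μ(x) K(x,y)`. -/
def mulMK (μ : V → ℝ) (K : V → V → ℝ) : V → ℝ :=
  fun y => ∑ x, μ x * K x y

/-- Action of a kernel on a function: `(Kf)(x) = ∑_y K(x,y) f(y)`. -/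
def mulKF (K : V → V → ℝ) (f : V → ℝ) : V → ℝ :=
  fun x => ∑ y, K x y * f y

/-- Product of two kernels (matrix product). -/
def mulKK (K L : V → V → ℝ) : V → V → ℝ :=
  fun x y => ∑ z, K x z * L z y

/-- The identity kernel. -/
def idK : V → V → ℝ :=
  fun x y => if x = y then 1 else 0

/-- `muSeq μ0 K n = μ_n = μ0 K_1 K_2 ⋯ K_n`. -/
def muSeq (μ0 : V → ℝ) (K : ℕ → V → V → ℝ) : ℕ → V → ℝ
  | 0 => μ0
  | n + 1 => mulMK (muSeq μ0 K n) (K (n + 1))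

/-- `Kseg K m n = K_{m,n} = K_{m+1} K_{m+2} ⋯ K_n` (identity if `n ≤ m`). -/
def Kseg (K : ℕ → V → V → ℝ) (m : ℕ) : ℕ → V → V → ℝ
  | 0 => idK
  | n + 1 => if n + 1 ≤ m then idK else mulKK (Kseg K m n) (K (n + 1))

/-- `‖f‖_{ℓ^p(ν)} = (∑ₓ |f(x)|^p ν(x))^{1/p}` for a real exponent `p`. -/
def lpNorm (ν : V → ℝ) (p : ℝ) (f : V → ℝ) : ℝ :=
  (∑ x, |f x| ^ p * ν x) ^ (1 / p)

/-- `‖f‖_{ℓ^∞} = maxₓ |f(x)|`. -/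
def linftyNorm (f : V → ℝ) : ℝ := ⨆ x, |f x|

/-- Operator "norm" of `A` with respect to an input norm and an output norm. -/
def opNorm (nIn nOut : (V → ℝ) → ℝ) (A : (V → ℝ) → V → ℝ) : ℝ :=
  sSup {r : ℝ | ∃ f : V → ℝ, nIn f ≤ 1 ∧ r = nOut (A f)}

/-- The second largest singular value of `K : ℓ²(νin) → ℓ²(νout)`,
i.e. the norm of `K - νin : ℓ²(νin) → ℓ²(νout)` where the measure `νin`
is identified with the operator `f ↦ νin(f)𝟙`. -/
def sigma1 (Kk : V → V → ℝ) (νin νout : V → ℝ) : ℝ :=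
  opNorm (lpNorm νin 2) (lpNorm νout 2)
    (fun f x => mulKF Kk f x - ∑ z, νin z * f z)

/-- Dirichlet form of a kernel `P` reversible with respect to `ν`. -/
def dirichlet (P : V → V → ℝ) (ν : V → ℝ) (f : V → ℝ) : ℝ :=
  (1 / 2) * ∑ x, ∑ y, (f x - f y) ^ 2 * (ν x * P x y)

/-- The kernel of `K*K` where `K : ℓ²(μcur) → ℓ²(μprev)`,
`P(x,y) = (1/μcur(x)) ∑_z μprev(z) K(z,x) K(z,y)`. -/
def Pker (Kk : V → V → ℝ) (μprev μcur : V → ℝ) : V → V → ℝ :=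
  fun x y => (1 / μcur x) * ∑ z, μprev z * Kk z x * Kk z y

/-- The kernel of the adjoint `K*` of `K : ℓ²(μcur) → ℓ²(μprev)`,
`K*(x,y) = K(y,x) μprev(y) / μcur(x)`. -/
def adjK (Kk : V → V → ℝ) (μprev μcur : V → ℝ) : V → V → ℝ :=
  fun x y => Kk y x * μprev y / μcur x

/-- The `ℓ²(ν)` relative entropy `L(f²,ν)`. -/
def entL (ν : V → ℝ) (f : V → ℝ) : ℝ :=
  ∑ x, f x ^ 2 * Real.log (f x ^ 2 / ∑ y, f y ^ 2 * ν y) * ν x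

/-- The logarithmic Sobolev constant of a kernel `P` with respect to `ν`. -/
def lsConst (P : V → V → ℝ) (ν : V → ℝ) : ℝ :=
  sInf {r : ℝ | ∃ f : V → ℝ, entL ν f ≠ 0 ∧ r = dirichlet P ν f / entL ν f}

/-- Chi-square type distance `d₂(κ,ν)`. -/
def d2 (κ ν : V → ℝ) : ℝ :=
  (∑ y, |κ y / ν y - 1| ^ 2 * ν y) ^ ((1 : ℝ) / 2)

/-- `c`-stability of a sequence of kernels with respect to `μ0`. -/
def cStable (c : ℝ) (μ0 : V → ℝ) (K : ℕ → V → V → ℝ) : Prop :=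
  ∀ n x, c⁻¹ ≤ muSeq μ0 K n x / μ0 x ∧ muSeq μ0 K n x / μ0 x ≤ c

/-- Powers of a kernel. -/
def kpow (Kk : V → V → ℝ) : ℕ → V → V → ℝ
  | 0 => idK
  | n + 1 => mulKK (kpow Kk n) Kk

/-- Irreducibility of a Markov kernel. -/
def IsIrreducible (Kk : V → V → ℝ) : Prop :=
  ∀ x y, ∃ n, 0 < kpow Kk n x y

/-- Aperiodicity of a Markov kernel. -/
def IsAperiodic (Kk : V → V → ℝ) : Prop :=
  ∀ x, ∃ N0 : ℕ, ∀ n, N0 ≤ n → 0 < kpow Kk n x x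


/-! ### Auxiliary lemmas -/

lemma cs_weighted (μ f g : V → ℝ) (hμ : ∀ x, 0 ≤ μ x) :
    (∑ x, f x * g x * μ x) ^ 2 ≤ (∑ x, f x ^ 2 * μ x) * (∑ x, g x ^ 2 * μ x) := by
  have h := Finset.sum_mul_sq_le_sq_mul_sq Finset.univ
      (fun x => f x * Real.sqrt (μ x)) (fun x => g x * Real.sqrt (μ x))
  have e1 : ∀ x : V, (f x * Real.sqrt (μ x)) * (g x * Real.sqrt (μ x)) = f x * g x * μ x := by
    intro x
    rw [show f x * Real.sqrt (μ x) * (g x * Real.sqrt (μ x))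
        = f x * g x * (Real.sqrt (μ x) * Real.sqrt (μ x)) by ring, Real.mul_self_sqrt (hμ x)]
  have e2 : ∀ x : V, (f x * Real.sqrt (μ x)) ^ 2 = f x ^ 2 * μ x := by
    intro x
    rw [show (f x * Real.sqrt (μ x)) ^ 2
        = f x ^ 2 * (Real.sqrt (μ x) * Real.sqrt (μ x)) by ring, Real.mul_self_sqrt (hμ x)]
  have e3 : ∀ x : V, (g x * Real.sqrt (μ x)) ^ 2 = g x ^ 2 * μ x := by
    intro x
    rw [show (g x * Real.sqrt (μ x)) ^ 2
        = g x ^ 2 * (Real.sqrt (μ x) * Real.sqrt (μ x)) by ring, Real.mul_self_sqrt (hμ x)]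
  simp only [e1, e2, e3] at h
  exact h

lemma lpNorm_two (ν f : V → ℝ) : lpNorm ν 2 f = Real.sqrt (∑ x, f x ^ 2 * ν x) := by
  unfold lpNorm
  rw [Real.sqrt_eq_rpow]
  congr 1
  refine Finset.sum_congr rfl fun x _ => ?_
  rw [show (2 : ℝ) = ((2 : ℕ) : ℝ) by norm_num, Real.rpow_natCast, sq_abs]

lemma d2_sq (κ ν : V → ℝ) (hν : ∀ x, 0 ≤ ν x) :
    d2 κ ν ^ (2 : ℕ) = ∑ y, (κ y / ν y - 1) ^ 2 * ν y := by
  unfold d2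
  have hs : 0 ≤ ∑ y, |κ y / ν y - 1| ^ 2 * ν y :=
    Finset.sum_nonneg fun y _ => mul_nonneg (pow_nonneg (abs_nonneg _) 2) (hν y)
  rw [← Real.sqrt_eq_rpow, Real.sq_sqrt hs]
  exact Finset.sum_congr rfl fun y _ => by rw [sq_abs]


lemma one_le_sum_sq (ν k : V → ℝ) (hν : ∀ x, 0 ≤ ν x) (hν1 : ∑ x, ν x = 1)
    (hk1 : ∑ x, k x * ν x = 1) : 1 ≤ ∑ x, k x ^ 2 * ν x := by
  have h := cs_weighted ν k (fun _ => 1) hν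
  simp only [mul_one, one_mul, one_pow] at h
  rw [hk1, hν1, mul_one] at h
  simpa using h

lemma entL_eq (ν k : V → ℝ) (hν : ∀ x, 0 < ν x) :
    entL ν k = (∑ x, k x ^ 2 * Real.log (k x ^ 2) * ν x)
      - (∑ x, k x ^ 2 * ν x) * Real.log (∑ x, k x ^ 2 * ν x) := by
  by_cases hF : (∑ x, k x ^ 2 * ν x) = 0
  · have hk : ∀ x, k x = 0 := by
      intro x
      have h0 := (Finset.sum_eq_zero_iff_of_nonneg
        (fun x _ => mul_nonneg (sq_nonneg (k x)) (hν x).le)).1 hF x (Finset.mem_univ x)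
      have := (hν x).ne'
      rcases mul_eq_zero.1 h0 with h|h
      · exact pow_eq_zero_iff (n := 2) (by norm_num) |>.1 h
      · exact absurd h this
    simp [entL, hk, hF]
  · unfold entL
    rw [Finset.sum_mul, ← Finset.sum_sub_distrib]
    refine Finset.sum_congr rfl fun x _ => ?_
    rcases eq_or_ne (k x) 0 with h|h
    · simp [h]
    · rw [Real.log_div (pow_ne_zero 2 h) hF]; ring

lemma entL_ge_self_log (ν k : V → ℝ) (hν : ∀ x, 0 < ν x) (hν1 : ∑ x, ν x = 1)
    (hk : ∀ x, 0 ≤ k x) (hk1 : ∑ x, k x * ν x = 1) :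
    (∑ x, k x ^ 2 * ν x) * Real.log (∑ x, k x ^ 2 * ν x) ≤ entL ν k := by
  set F := ∑ x, k x ^ 2 * ν x with hFdef
  have hF1 : 1 ≤ F := one_le_sum_sq ν k (fun x => (hν x).le) hν1 hk1
  have hFpos : 0 < F := lt_of_lt_of_le one_pos hF1
  have hpt : ∀ x : V, 2 * k x ^ 2 * Real.log F - 2 * F * k x + 2 * k x ^ 2
      ≤ k x ^ 2 * Real.log (k x ^ 2) := by
    intro x
    rcases (hk x).eq_or_lt with h|h
    · rw [← h]; simp
    · have h1 : Real.log F - Real.log (k x) ≤ F / k x - 1 := by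
        have h2 := Real.log_le_sub_one_of_pos (show (0:ℝ) < F / k x from div_pos hFpos h)
        rwa [Real.log_div hFpos.ne' h.ne'] at h2
      have h2 : Real.log (k x ^ 2) = 2 * Real.log (k x) := by
        rw [Real.log_pow]; norm_num
      rw [h2]
      have h4 : k x ^ 2 * (Real.log F - Real.log (k x))
          ≤ k x ^ 2 * (F / k x - 1) := mul_le_mul_of_nonneg_left h1 (sq_nonneg _)
      have h3 : k x ^ 2 * (F / k x) = F * k x := by field_simp
      nlinarith [h4, h3]
  have hsum : ∑ x, (2 * k x ^ 2 * Real.log F - 2 * F * k x + 2 * k x ^ 2) * ν x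
      ≤ ∑ x, k x ^ 2 * Real.log (k x ^ 2) * ν x :=
    Finset.sum_le_sum fun x _ => mul_le_mul_of_nonneg_right (hpt x) (hν x).le
  have hlhs : ∑ x, (2 * k x ^ 2 * Real.log F - 2 * F * k x + 2 * k x ^ 2) * ν x
      = 2 * F * Real.log F := by
    have e : ∀ x : V, (2 * k x ^ 2 * Real.log F - 2 * F * k x + 2 * k x ^ 2) * ν x
        = 2 * Real.log F * (k x ^ 2 * ν x) - 2 * F * (k x * ν x) + 2 * (k x ^ 2 * ν x) := by
      intro x; ring
    simp_rw [e]
    rw [Finset.sum_add_distrib, Finset.sum_sub_distrib, ← Finset.mul_sum, ← Finset.mul_sum,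
      ← Finset.mul_sum, hk1, ← hFdef]
    ring
  rw [entL_eq ν k hν, ← hFdef]
  rw [hlhs] at hsum
  linarith

lemma entL_abs (ν f : V → ℝ) : entL ν (fun x => |f x|) = entL ν f := by
  simp [entL, sq_abs]

lemma entL_smul (ν k : V → ℝ) (c : ℝ) (hc : c ≠ 0) :
    entL ν (fun x => c * k x) = c ^ 2 * entL ν k := by
  unfold entL
  rw [Finset.mul_sum]
  refine Finset.sum_congr rfl fun x _ => ?_
  have h1 : ∑ y, (c * k y) ^ 2 * ν y = c ^ 2 * ∑ y, k y ^ 2 * ν y := by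
    rw [Finset.mul_sum]; exact Finset.sum_congr rfl fun y _ => by ring
  rw [h1, mul_pow, mul_div_mul_left _ _ (pow_ne_zero 2 hc)]
  ring

lemma entL_nonneg (ν f : V → ℝ) (hν : ∀ x, 0 < ν x) (hν1 : ∑ x, ν x = 1) :
    0 ≤ entL ν f := by
  rw [← entL_abs ν f]
  set g : V → ℝ := fun x => |f x| with hg
  have hgnn : ∀ x, 0 ≤ g x := fun x => abs_nonneg _
  set A := ∑ x, g x * ν x with hA
  have hA0 : 0 ≤ A := Finset.sum_nonneg fun x _ => mul_nonneg (hgnn x) (hν x).le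
  rcases hA0.eq_or_lt with h|h
  · have h0 := (Finset.sum_eq_zero_iff_of_nonneg
      (fun x _ => mul_nonneg (hgnn x) (hν x).le)).1 h.symm
    have hg0 : ∀ x, g x = 0 := by
      intro x
      rcases mul_eq_zero.1 (h0 x (Finset.mem_univ x)) with h'|h'
      · exact h'
      · exact absurd h' (hν x).ne'
    have : entL ν g = 0 := by
      unfold entL
      refine Finset.sum_eq_zero fun x _ => ?_
      rw [hg0 x]; norm_num
    rw [this]
  · have hrw : entL ν g = A ^ 2 * entL ν (fun x => g x / A) := by
      rw [← entL_smul ν (fun x => g x / A) A h.ne']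
      congr 1; funext x; field_simp
    rw [hrw]
    have h1 : ∑ x, (g x / A) * ν x = 1 := by
      simp_rw [div_mul_eq_mul_div]
      rw [← Finset.sum_div, ← hA, div_self h.ne']
    have hge := entL_ge_self_log ν (fun x => g x / A) hν hν1
      (fun x => div_nonneg (hgnn x) hA0) h1
    have hF1 : 1 ≤ ∑ x, (g x / A) ^ 2 * ν x :=
      one_le_sum_sq ν _ (fun x => (hν x).le) hν1 h1
    have : 0 ≤ entL ν (fun x => g x / A) := by
      refine le_trans ?_ hge
      exact mul_nonneg (by linarith) (Real.log_nonneg hF1)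
    positivity

lemma dirichlet_nonneg (P : V → V → ℝ) (ν f : V → ℝ)
    (hP : ∀ x y, 0 ≤ P x y) (hν : ∀ x, 0 ≤ ν x) : 0 ≤ dirichlet P ν f :=
  mul_nonneg (by norm_num) (Finset.sum_nonneg fun x _ => Finset.sum_nonneg fun y _ =>
    mul_nonneg (sq_nonneg _) (mul_nonneg (hν x) (hP x y)))

lemma lsConst_nonneg (P : V → V → ℝ) (ν : V → ℝ)
    (hν : ∀ x, 0 < ν x) (hν1 : ∑ x, ν x = 1) (hP : ∀ x y, 0 ≤ P x y) :
    0 ≤ lsConst P ν := by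
  apply Real.sInf_nonneg
  rintro r ⟨f, hf, rfl⟩
  exact div_nonneg (dirichlet_nonneg P ν f hP fun x => (hν x).le) (entL_nonneg ν f hν hν1)

lemma lsConst_mul_le (P : V → V → ℝ) (ν f : V → ℝ)
    (hν : ∀ x, 0 < ν x) (hν1 : ∑ x, ν x = 1) (hP : ∀ x y, 0 ≤ P x y)
    (hLne : entL ν f ≠ 0) :
    lsConst P ν * entL ν f ≤ dirichlet P ν f := by
  have hL : 0 < entL ν f := (entL_nonneg ν f hν hν1).lt_of_ne (Ne.symm hLne)
  have hbdd : BddBelow {r : ℝ | ∃ g : V → ℝ, entL ν g ≠ 0 ∧ r = dirichlet P ν g / entL ν g} := by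
    refine ⟨0, ?_⟩
    rintro r ⟨g, hg, rfl⟩
    exact div_nonneg (dirichlet_nonneg P ν g hP fun x => (hν x).le) (entL_nonneg ν g hν hν1)
  have hle : lsConst P ν ≤ dirichlet P ν f / entL ν f := csInf_le hbdd ⟨f, hLne, rfl⟩
  calc lsConst P ν * entL ν f ≤ (dirichlet P ν f / entL ν f) * entL ν f :=
        mul_le_mul_of_nonneg_right hle hL.le
    _ = dirichlet P ν f := div_mul_cancel₀ _ hL.ne'

lemma Pker_nonneg (Kk : V → V → ℝ) (μp μc : V → ℝ)
    (hK : ∀ x y, 0 ≤ Kk x y) (hμp : ∀ x, 0 ≤ μp x) (hμc : ∀ x, 0 < μc x) :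
    ∀ a b, 0 ≤ Pker Kk μp μc a b := by
  intro a b
  exact mul_nonneg (one_div_nonneg.2 (hμc a).le) (Finset.sum_nonneg fun z _ =>
    mul_nonneg (mul_nonneg (hμp z) (hK z a)) (hK z b))

lemma dirichlet_Pker (Kk : V → V → ℝ) (μp μc : V → ℝ) (f : V → ℝ)
    (hμc : ∀ y, μc y = ∑ z, μp z * Kk z y) (hμcne : ∀ y, μc y ≠ 0)
    (hrow : ∀ z, ∑ y, Kk z y = 1) :
    dirichlet (Pker Kk μp μc) μc f
      = (∑ y, f y ^ 2 * μc y) - ∑ z, (mulKF Kk f z) ^ 2 * μp z := by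
  unfold dirichlet
  have hμP : ∀ a b : V, μc a * Pker Kk μp μc a b = ∑ z, μp z * Kk z a * Kk z b := by
    intro a b; unfold Pker
    rw [← mul_assoc, mul_one_div, div_self (hμcne a), one_mul]
  simp_rw [hμP]
  have swap : ∑ x, ∑ y, (f x - f y) ^ 2 * (∑ z, μp z * Kk z x * Kk z y)
      = ∑ z, ∑ x, ∑ y, (f x - f y) ^ 2 * (μp z * Kk z x * Kk z y) := by
    simp_rw [Finset.mul_sum]
    have h : ∀ x : V, ∑ y, ∑ z, (f x - f y) ^ 2 * (μp z * Kk z x * Kk z y)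
        = ∑ z, ∑ y, (f x - f y) ^ 2 * (μp z * Kk z x * Kk z y) := fun x => Finset.sum_comm
    simp_rw [h]
    exact Finset.sum_comm
  rw [swap]
  have hz : ∀ z : V, ∑ x, ∑ y, (f x - f y) ^ 2 * (μp z * Kk z x * Kk z y)
      = 2 * (μp z * ((∑ x, Kk z x * f x ^ 2) - (mulKF Kk f z) ^ 2)) := by
    intro z
    have e : ∀ x y : V, (f x - f y) ^ 2 * (μp z * Kk z x * Kk z y)
        = μp z * (Kk z x * f x ^ 2) * Kk z y + (μp z * Kk z x) * (Kk z y * f y ^ 2)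
          - 2 * ((μp z * (Kk z x * f x)) * (Kk z y * f y)) := by
      intro x y; ring
    simp_rw [e]
    have h1 : ∑ x, ∑ y, μp z * (Kk z x * f x ^ 2) * Kk z y
        = μp z * ∑ x, Kk z x * f x ^ 2 := by
      have : ∀ x : V, ∑ y, μp z * (Kk z x * f x ^ 2) * Kk z y
          = μp z * (Kk z x * f x ^ 2) := by
        intro x; rw [← Finset.mul_sum, hrow z, mul_one]
      simp_rw [this, ← Finset.mul_sum]
    have h2 : ∑ x, ∑ y, (μp z * Kk z x) * (Kk z y * f y ^ 2)
        = μp z * ∑ y, Kk z y * f y ^ 2 := by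
      rw [Finset.sum_comm]
      have : ∀ y : V, ∑ x, (μp z * Kk z x) * (Kk z y * f y ^ 2)
          = μp z * (Kk z y * f y ^ 2) := by
        intro y
        rw [← Finset.sum_mul, ← Finset.mul_sum, hrow z, mul_one]
      simp_rw [this, ← Finset.mul_sum]
    have h3 : ∑ x, ∑ y, 2 * ((μp z * (Kk z x * f x)) * (Kk z y * f y))
        = 2 * (μp z * (mulKF Kk f z) ^ 2) := by
      have e1 : ∀ x : V, ∑ y, 2 * ((μp z * (Kk z x * f x)) * (Kk z y * f y))
          = 2 * (μp z * (Kk z x * f x)) * (mulKF Kk f z) := by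
        intro x
        have e2 : ∀ y : V, 2 * ((μp z * (Kk z x * f x)) * (Kk z y * f y))
            = (2 * (μp z * (Kk z x * f x))) * (Kk z y * f y) := fun y => by ring
        simp_rw [e2, ← Finset.mul_sum]
        rfl
      simp_rw [e1]
      have e3 : ∀ x : V, 2 * (μp z * (Kk z x * f x)) * mulKF Kk f z
          = (2 * μp z * mulKF Kk f z) * (Kk z x * f x) := fun x => by ring
      simp_rw [e3, ← Finset.mul_sum]
      show _ * mulKF Kk f z = _
      ring
    simp_rw [Finset.sum_sub_distrib, Finset.sum_add_distrib]
    rw [h1, h2, h3]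
    ring
  simp_rw [hz]
  rw [← Finset.mul_sum]
  have hswap2 : ∑ z, μp z * ((∑ x, Kk z x * f x ^ 2) - (mulKF Kk f z) ^ 2)
      = (∑ y, f y ^ 2 * μc y) - ∑ z, (mulKF Kk f z) ^ 2 * μp z := by
    have e : ∀ z : V, μp z * ((∑ x, Kk z x * f x ^ 2) - (mulKF Kk f z) ^ 2)
        = (∑ x, μp z * Kk z x * f x ^ 2) - (mulKF Kk f z) ^ 2 * μp z := by
      intro z
      rw [mul_sub, Finset.mul_sum]
      have e4 : ∀ x : V, μp z * (Kk z x * f x ^ 2) = μp z * Kk z x * f x ^ 2 :=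
        fun x => by ring
      simp_rw [e4]
      ring
    simp_rw [e]
    rw [Finset.sum_sub_distrib]
    congr 1
    rw [Finset.sum_comm]
    refine Finset.sum_congr rfl fun x _ => ?_
    rw [hμc x, Finset.mul_sum]
    exact Finset.sum_congr rfl fun z _ => by ring
  rw [hswap2]
  ring


lemma sigma1_bdd (Kk : V → V → ℝ) (νin νout : V → ℝ)
    (hin : ∀ x, 0 < νin x) (hout : ∀ x, 0 ≤ νout x)
    (hK0 : ∀ x y, 0 ≤ Kk x y) (hK1 : ∀ x, ∑ y, Kk x y = 1) :
    BddAbove {r : ℝ | ∃ f : V → ℝ, lpNorm νin 2 f ≤ 1 ∧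
      r = lpNorm νout 2 (fun x => mulKF Kk f x - ∑ z, νin z * f z)} := by
  set B := ∑ y : V, (1 + νin y) * (1 / Real.sqrt (νin y)) with hB
  have hB0 : 0 ≤ B := Finset.sum_nonneg fun y _ =>
    mul_nonneg (by nlinarith [hin y]) (one_div_nonneg.2 (Real.sqrt_nonneg _))
  refine ⟨Real.sqrt (B ^ 2 * ∑ x, νout x), ?_⟩
  rintro r ⟨f, hf, rfl⟩
  rw [lpNorm_two] at hf ⊢
  have hs0 : 0 ≤ ∑ x, f x ^ 2 * νin x :=
    Finset.sum_nonneg fun x _ => mul_nonneg (sq_nonneg _) (hin x).le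
  have hs1 : ∑ x, f x ^ 2 * νin x ≤ 1 := by
    nlinarith [Real.sq_sqrt hs0, Real.sqrt_nonneg (∑ x, f x ^ 2 * νin x)]
  have hfb : ∀ y, |f y| ≤ 1 / Real.sqrt (νin y) := by
    intro y
    have h1 : f y ^ 2 * νin y ≤ 1 :=
      le_trans (Finset.single_le_sum
        (fun x _ => mul_nonneg (sq_nonneg (f x)) (hin x).le) (Finset.mem_univ y)) hs1
    have h2 : f y ^ 2 ≤ 1 / νin y := by
      rw [le_div_iff₀ (hin y)]; linarith
    calc |f y| = Real.sqrt (f y ^ 2) := (Real.sqrt_sq_eq_abs (f y)).symm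
      _ ≤ Real.sqrt (1 / νin y) := Real.sqrt_le_sqrt h2
      _ = 1 / Real.sqrt (νin y) := by
          rw [one_div, one_div, Real.sqrt_inv]
  have hpt : ∀ x, (mulKF Kk f x - ∑ z, νin z * f z) ^ 2 ≤ B ^ 2 := by
    intro x
    have habs : |mulKF Kk f x - ∑ z, νin z * f z| ≤ B := by
      have h1 : |mulKF Kk f x| ≤ ∑ y, Kk x y * (1 / Real.sqrt (νin y)) := by
        refine le_trans (Finset.abs_sum_le_sum_abs _ _) ?_
        refine Finset.sum_le_sum fun y _ => ?_
        rw [abs_mul, abs_of_nonneg (hK0 x y)]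
        exact mul_le_mul_of_nonneg_left (hfb y) (hK0 x y)
      have h2 : |∑ z, νin z * f z| ≤ ∑ y, νin y * (1 / Real.sqrt (νin y)) := by
        refine le_trans (Finset.abs_sum_le_sum_abs _ _) ?_
        refine Finset.sum_le_sum fun y _ => ?_
        rw [abs_mul, abs_of_nonneg (hin y).le]
        exact mul_le_mul_of_nonneg_left (hfb y) (hin y).le
      have h3 : ∑ y, Kk x y * (1 / Real.sqrt (νin y))
          + ∑ y, νin y * (1 / Real.sqrt (νin y))
          = ∑ y, (Kk x y + νin y) * (1 / Real.sqrt (νin y)) := by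
        rw [← Finset.sum_add_distrib]
        exact Finset.sum_congr rfl fun y _ => by ring
      have h4 : ∑ y, (Kk x y + νin y) * (1 / Real.sqrt (νin y)) ≤ B := by
        refine Finset.sum_le_sum fun y _ => ?_
        have hK1' : Kk x y ≤ 1 := by
          calc Kk x y ≤ ∑ z, Kk x z :=
                Finset.single_le_sum (fun z _ => hK0 x z) (Finset.mem_univ y)
            _ = 1 := hK1 x
        exact mul_le_mul_of_nonneg_right (by linarith)
          (one_div_nonneg.2 (Real.sqrt_nonneg _))
      calc |mulKF Kk f x - ∑ z, νin z * f z|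
          ≤ |mulKF Kk f x| + |∑ z, νin z * f z| := abs_sub _ _
        _ ≤ ∑ y, Kk x y * (1 / Real.sqrt (νin y))
            + ∑ y, νin y * (1 / Real.sqrt (νin y)) := add_le_add h1 h2
        _ = ∑ y, (Kk x y + νin y) * (1 / Real.sqrt (νin y)) := h3
        _ ≤ B := h4
    nlinarith [habs, abs_nonneg (mulKF Kk f x - ∑ z, νin z * f z),
      sq_abs (mulKF Kk f x - ∑ z, νin z * f z)]
  calc Real.sqrt (∑ x, (mulKF Kk f x - ∑ z, νin z * f z) ^ 2 * νout x)
      ≤ Real.sqrt (∑ x, B ^ 2 * νout x) := Real.sqrt_le_sqrt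
        (Finset.sum_le_sum fun x _ => mul_le_mul_of_nonneg_right (hpt x) (hout x))
    _ = Real.sqrt (B ^ 2 * ∑ x, νout x) := by rw [← Finset.mul_sum]

lemma sigma1_nonneg (Kk : V → V → ℝ) (νin νout : V → ℝ)
    (hin : ∀ x, 0 < νin x) (hout : ∀ x, 0 ≤ νout x)
    (hK0 : ∀ x y, 0 ≤ Kk x y) (hK1 : ∀ x, ∑ y, Kk x y = 1) :
    0 ≤ sigma1 Kk νin νout := by
  have hbdd := sigma1_bdd Kk νin νout hin hout hK0 hK1
  refine le_csSup hbdd ⟨fun _ => 0, ?_, ?_⟩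
  · rw [lpNorm_two]; simp
  · rw [lpNorm_two]
    have : ∀ x : V, mulKF Kk (fun _ => (0:ℝ)) x - ∑ z, νin z * (0:ℝ) = 0 := by
      intro x; simp [mulKF]
    simp_rw [this]
    simp

lemma sigma1_sq_bound (Kk : V → V → ℝ) (νin νout : V → ℝ)
    (hin : ∀ x, 0 < νin x) (hout : ∀ x, 0 ≤ νout x)
    (hK0 : ∀ x y, 0 ≤ Kk x y) (hK1 : ∀ x, ∑ y, Kk x y = 1)
    (h : V → ℝ) (h0 : ∑ z, νin z * h z = 0) :
    ∑ z, (mulKF Kk h z) ^ 2 * νout z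
      ≤ sigma1 Kk νin νout ^ 2 * ∑ z, h z ^ 2 * νin z := by
  have hbdd := sigma1_bdd Kk νin νout hin hout hK0 hK1
  have hσ0 : 0 ≤ sigma1 Kk νin νout := sigma1_nonneg Kk νin νout hin hout hK0 hK1
  set s := ∑ z, h z ^ 2 * νin z with hs
  have hs0 : 0 ≤ s := Finset.sum_nonneg fun z _ => mul_nonneg (sq_nonneg _) (hin z).le
  rcases hs0.eq_or_lt with hz|hz
  · have h00 := (Finset.sum_eq_zero_iff_of_nonneg
      (fun z _ => mul_nonneg (sq_nonneg (h z)) (hin z).le)).1 hz.symm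
    have hh : ∀ z, h z = 0 := by
      intro z
      rcases mul_eq_zero.1 (h00 z (Finset.mem_univ z)) with h'|h'
      · exact pow_eq_zero_iff (n := 2) (by norm_num) |>.1 h'
      · exact absurd h' (hin z).ne'
    have hm : ∀ z : V, mulKF Kk h z = 0 := fun z =>
      Finset.sum_eq_zero fun y _ => by rw [hh y, mul_zero]
    simp_rw [hm]
    rw [← hz]
    simp
  · set c := Real.sqrt s with hc
    have hcpos : 0 < c := Real.sqrt_pos.2 hz
    have hc2 : c ^ 2 = s := Real.sq_sqrt hs0
    have hlp : lpNorm νin 2 (fun y => h y / c) ≤ 1 := by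
      rw [lpNorm_two]
      have e : ∑ x, (h x / c) ^ 2 * νin x = s / c ^ 2 := by
        simp_rw [div_pow, div_mul_eq_mul_div]
        rw [← Finset.sum_div, ← hs]
      rw [e, hc2, div_self hz.ne', Real.sqrt_one]
  -- membership and conclusion
    have hA : (fun x => mulKF Kk (fun y => h y / c) x - ∑ z, νin z * (h z / c))
        = fun x => mulKF Kk h x / c := by
      funext x
      have e1 : mulKF Kk (fun y => h y / c) x = mulKF Kk h x / c := by
        unfold mulKF
        rw [Finset.sum_div]
        exact Finset.sum_congr rfl fun y _ => by
          show Kk x y * (h y / c) = Kk x y * h y / c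
          ring
      have e2 : ∑ z, νin z * (h z / c) = 0 := by
        have e3 : ∑ z, νin z * (h z / c) = (∑ z, νin z * h z) / c := by
          rw [Finset.sum_div]
          exact Finset.sum_congr rfl fun z _ => by ring
        rw [e3, h0, zero_div]
      rw [e1, e2, sub_zero]
    have hr : lpNorm νout 2 (fun x => mulKF Kk h x / c) ≤ sigma1 Kk νin νout := by
      rw [← hA]
      exact le_csSup hbdd ⟨fun y => h y / c, hlp, rfl⟩
    rw [lpNorm_two] at hr
    have e5 : ∑ x, (mulKF Kk h x / c) ^ 2 * νout x
        = (∑ x, (mulKF Kk h x) ^ 2 * νout x) / s := by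
      simp_rw [div_pow, div_mul_eq_mul_div]
      rw [← Finset.sum_div, hc2]
    rw [e5] at hr
    have hT0 : 0 ≤ (∑ x, (mulKF Kk h x) ^ 2 * νout x) / s :=
      div_nonneg (Finset.sum_nonneg fun x _ => mul_nonneg (sq_nonneg _) (hout x)) hs0
    have h6 : (∑ x, (mulKF Kk h x) ^ 2 * νout x) / s ≤ sigma1 Kk νin νout ^ 2 := by
      nlinarith [Real.sq_sqrt hT0, Real.sqrt_nonneg ((∑ x, (mulKF Kk h x) ^ 2 * νout x) / s)]
    rw [div_le_iff₀ hz] at h6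
    linarith


lemma Kseg_zero_succ (K : ℕ → V → V → ℝ) (n : ℕ) :
    Kseg K 0 (n + 1) = mulKK (Kseg K 0 n) (K (n + 1)) := by
  show (if n + 1 ≤ 0 then idK else mulKK (Kseg K 0 n) (K (n + 1))) = _
  rw [if_neg (by omega)]

section Main

variable (K : ℕ → V → V → ℝ) (μ0 : V → ℝ) (x : V)

lemma Kseg_zero_nonneg (hK : ∀ i, 1 ≤ i → IsKernel (K i)) :
    ∀ n a b, 0 ≤ Kseg K 0 n a b := by
  intro n
  induction n with
  | zero =>
    intro a b
    show (0:ℝ) ≤ idK a b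
    unfold idK
    split <;> norm_num
  | succ n ih =>
    intro a b
    rw [Kseg_zero_succ]
    exact Finset.sum_nonneg fun z _ =>
      mul_nonneg (ih a z) ((hK (n+1) (by omega)).1 z b)

lemma Kseg_zero_rowsum (hK : ∀ i, 1 ≤ i → IsKernel (K i)) :
    ∀ n a, ∑ y, Kseg K 0 n a y = 1 := by
  intro n
  induction n with
  | zero =>
    intro a
    show ∑ y, idK a y = 1
    unfold idK
    simp
  | succ n ih =>
    intro a
    rw [Kseg_zero_succ]
    show ∑ y, ∑ z, Kseg K 0 n a z * K (n+1) z y = 1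
    rw [Finset.sum_comm]
    have e : ∀ z : V, ∑ y, Kseg K 0 n a z * K (n+1) z y = Kseg K 0 n a z := by
      intro z
      rw [← Finset.mul_sum, (hK (n+1) (by omega)).2 z, mul_one]
    simp_rw [e]
    exact ih a

lemma muSeq_rowsum (hK : ∀ i, 1 ≤ i → IsKernel (K i)) (hμ01 : ∑ y, μ0 y = 1) :
    ∀ n, ∑ y, muSeq μ0 K n y = 1 := by
  intro n
  induction n with
  | zero => exact hμ01
  | succ n ih =>
    show ∑ y, ∑ z, muSeq μ0 K n z * K (n+1) z y = 1
    rw [Finset.sum_comm]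
    have e : ∀ z : V, ∑ y, muSeq μ0 K n z * K (n+1) z y = muSeq μ0 K n z := by
      intro z
      rw [← Finset.mul_sum, (hK (n+1) (by omega)).2 z, mul_one]
    simp_rw [e]
    exact ih

/-- The density of the chain started at `x` after `n` steps. -/
def kd (n : ℕ) (y : V) : ℝ := Kseg K 0 n x y / muSeq μ0 K n y

/-- The chi-square functional plus one: `‖k_n‖²`. -/
def Sq (n : ℕ) : ℝ := ∑ y, kd K μ0 x n y ^ 2 * muSeq μ0 K n y

/-- The squared chi-square distance. -/
def Dq (n : ℕ) : ℝ := ∑ y, (kd K μ0 x n y - 1) ^ 2 * muSeq μ0 K n y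

variable (hK : ∀ i, 1 ≤ i → IsKernel (K i)) (hμ01 : ∑ y, μ0 y = 1)
  (hpos : ∀ n y, 0 < muSeq μ0 K n y)

include hK hpos in
lemma kd_nonneg : ∀ n y, 0 ≤ kd K μ0 x n y := fun n y =>
  div_nonneg (Kseg_zero_nonneg K hK n x y) (hpos n y).le

include hpos in
lemma kd_mul : ∀ n y, kd K μ0 x n y * muSeq μ0 K n y = Kseg K 0 n x y := fun n y =>
  div_mul_cancel₀ _ (hpos n y).ne'

include hK hpos in
lemma kd_sum : ∀ n, ∑ y, kd K μ0 x n y * muSeq μ0 K n y = 1 := by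
  intro n
  simp_rw [kd_mul K μ0 x hpos]
  exact Kseg_zero_rowsum K hK n x

include hpos in
lemma kd_rec : ∀ n y, kd K μ0 x (n+1) y * muSeq μ0 K (n+1) y
    = ∑ z, kd K μ0 x n z * muSeq μ0 K n z * K (n+1) z y := by
  intro n y
  rw [kd_mul K μ0 x hpos, Kseg_zero_succ]
  show ∑ z, Kseg K 0 n x z * K (n+1) z y = _
  exact Finset.sum_congr rfl fun z _ => by rw [kd_mul K μ0 x hpos]

include hK hμ01 hpos in
lemma Sq_ge_one : ∀ n, 1 ≤ Sq K μ0 x n := fun n =>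
  one_le_sum_sq (muSeq μ0 K n) (kd K μ0 x n) (fun y => (hpos n y).le)
    (muSeq_rowsum K μ0 hK hμ01 n) (kd_sum K μ0 x hK hpos n)

include hK hμ01 hpos in
lemma Sq_pos : ∀ n, 0 < Sq K μ0 x n := fun n =>
  lt_of_lt_of_le one_pos (Sq_ge_one K μ0 x hK hμ01 hpos n)

include hK hμ01 hpos in
lemma Dq_eq : ∀ n, Dq K μ0 x n = Sq K μ0 x n - 1 := by
  intro n
  unfold Dq Sq
  have e : ∀ y : V, (kd K μ0 x n y - 1) ^ 2 * muSeq μ0 K n y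
      = kd K μ0 x n y ^ 2 * muSeq μ0 K n y
        - 2 * (kd K μ0 x n y * muSeq μ0 K n y) + muSeq μ0 K n y := fun y => by ring
  simp_rw [e]
  rw [Finset.sum_add_distrib, Finset.sum_sub_distrib, ← Finset.mul_sum,
    kd_sum K μ0 x hK hpos n, muSeq_rowsum K μ0 hK hμ01 n]
  ring

include hpos in
lemma Sq_zero : Sq K μ0 x 0 = 1 / μ0 x := by
  unfold Sq
  have e : ∀ y : V, kd K μ0 x 0 y ^ 2 * muSeq μ0 K 0 y
      = if y = x then 1 / μ0 x else 0 := by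
    intro y
    show (idK x y / μ0 y) ^ 2 * μ0 y = _
    by_cases h : y = x
    · subst h
      unfold idK
      rw [if_pos rfl]
      rw [if_pos rfl]
      have := (hpos 0 y).ne'
      show ((1:ℝ) / μ0 y) ^ 2 * μ0 y = 1 / μ0 y
      have hne : μ0 y ≠ 0 := this
      field_simp
    · unfold idK
      rw [if_neg (fun hh => h hh.symm), if_neg h]
      norm_num
  simp_rw [e]
  simp

include hpos in
lemma Dq_nonneg : ∀ n, 0 ≤ Dq K μ0 x n := fun n =>
  Finset.sum_nonneg fun y _ => mul_nonneg (sq_nonneg _) (hpos n y).le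

include hK hμ01 hpos in
lemma Bstep (i : ℕ) :
    (1 + lsConst (Pker (K (i+1)) (muSeq μ0 K i) (muSeq μ0 K (i+1))) (muSeq μ0 K (i+1)))
      * Real.log (Sq K μ0 x (i+1)) ≤ Real.log (Sq K μ0 x i) := by
  have hKnn := (hK (i+1) (by omega)).1
  have hKrow := (hK (i+1) (by omega)).2
  have hPnn := Pker_nonneg (K (i+1)) (muSeq μ0 K i) (muSeq μ0 K (i+1)) hKnn
    (fun z => (hpos i z).le) (hpos (i+1))
  set l := lsConst (Pker (K (i+1)) (muSeq μ0 K i) (muSeq μ0 K (i+1))) (muSeq μ0 K (i+1)) with hl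
  have hl0 : 0 ≤ l := lsConst_nonneg _ _ (hpos (i+1)) (muSeq_rowsum K μ0 hK hμ01 (i+1)) hPnn
  have hF1 : 1 ≤ Sq K μ0 x (i+1) := Sq_ge_one K μ0 x hK hμ01 hpos (i+1)
  have hFpos := Sq_pos K μ0 x hK hμ01 hpos (i+1)
  have hGpos := Sq_pos K μ0 x hK hμ01 hpos i
  have step1 : Sq K μ0 x (i+1)
      = ∑ z, mulKF (K (i+1)) (kd K μ0 x (i+1)) z * kd K μ0 x i z * muSeq μ0 K i z := by
    unfold Sq
    calc ∑ y, kd K μ0 x (i+1) y ^ 2 * muSeq μ0 K (i+1) y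
        = ∑ y, kd K μ0 x (i+1) y * (kd K μ0 x (i+1) y * muSeq μ0 K (i+1) y) :=
          Finset.sum_congr rfl fun y _ => by ring
      _ = ∑ y, kd K μ0 x (i+1) y * (∑ z, kd K μ0 x i z * muSeq μ0 K i z * K (i+1) z y) :=
          Finset.sum_congr rfl fun y _ => by rw [kd_rec K μ0 x hpos i y]
      _ = ∑ z, ∑ y, kd K μ0 x (i+1) y * (kd K μ0 x i z * muSeq μ0 K i z * K (i+1) z y) := by
          simp_rw [Finset.mul_sum]; exact Finset.sum_comm
      _ = ∑ z, mulKF (K (i+1)) (kd K μ0 x (i+1)) z * kd K μ0 x i z * muSeq μ0 K i z := by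
          refine Finset.sum_congr rfl fun z _ => ?_
          unfold mulKF
          rw [Finset.sum_mul, Finset.sum_mul]
          exact Finset.sum_congr rfl fun y _ => by ring
  have step2 : Sq K μ0 x (i+1) ^ 2
      ≤ (∑ z, mulKF (K (i+1)) (kd K μ0 x (i+1)) z ^ 2 * muSeq μ0 K i z) * Sq K μ0 x i := by
    have h := cs_weighted (muSeq μ0 K i) (mulKF (K (i+1)) (kd K μ0 x (i+1))) (kd K μ0 x i)
      (fun z => (hpos i z).le)
    rw [← step1] at h
    exact h
  have step3 : dirichlet (Pker (K (i+1)) (muSeq μ0 K i) (muSeq μ0 K (i+1)))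
        (muSeq μ0 K (i+1)) (kd K μ0 x (i+1))
      = Sq K μ0 x (i+1)
        - ∑ z, mulKF (K (i+1)) (kd K μ0 x (i+1)) z ^ 2 * muSeq μ0 K i z :=
    dirichlet_Pker (K (i+1)) (muSeq μ0 K i) (muSeq μ0 K (i+1)) (kd K μ0 x (i+1))
      (fun y => rfl) (fun y => (hpos (i+1) y).ne') hKrow
  have hLge : Sq K μ0 x (i+1) * Real.log (Sq K μ0 x (i+1))
      ≤ entL (muSeq μ0 K (i+1)) (kd K μ0 x (i+1)) :=
    entL_ge_self_log (muSeq μ0 K (i+1)) (kd K μ0 x (i+1)) (hpos (i+1))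
      (muSeq_rowsum K μ0 hK hμ01 (i+1)) (kd_nonneg K μ0 x hK hpos (i+1))
      (kd_sum K μ0 x hK hpos (i+1))
  have hE : l * (Sq K μ0 x (i+1) * Real.log (Sq K μ0 x (i+1)))
      ≤ dirichlet (Pker (K (i+1)) (muSeq μ0 K i) (muSeq μ0 K (i+1)))
          (muSeq μ0 K (i+1)) (kd K μ0 x (i+1)) := by
    rcases eq_or_ne (entL (muSeq μ0 K (i+1)) (kd K μ0 x (i+1))) 0 with hL|hL
    · have h1 : Sq K μ0 x (i+1) * Real.log (Sq K μ0 x (i+1)) ≤ 0 := by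
        rw [hL] at hLge; exact hLge
      have h2 : 0 ≤ Sq K μ0 x (i+1) * Real.log (Sq K μ0 x (i+1)) :=
        mul_nonneg (by linarith) (Real.log_nonneg hF1)
      rw [le_antisymm h1 h2, mul_zero]
      exact dirichlet_nonneg _ _ _ hPnn fun z => (hpos (i+1) z).le
    · calc l * (Sq K μ0 x (i+1) * Real.log (Sq K μ0 x (i+1)))
          ≤ l * entL (muSeq μ0 K (i+1)) (kd K μ0 x (i+1)) :=
            mul_le_mul_of_nonneg_left hLge hl0
        _ ≤ _ := lsConst_mul_le _ _ _ (hpos (i+1)) (muSeq_rowsum K μ0 hK hμ01 (i+1)) hPnn hL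
  have step5 : Sq K μ0 x (i+1) ^ 2
      ≤ (Sq K μ0 x (i+1) - l * (Sq K μ0 x (i+1) * Real.log (Sq K μ0 x (i+1))))
          * Sq K μ0 x i := by
    rw [step3] at hE
    have h7 : (∑ z, mulKF (K (i+1)) (kd K μ0 x (i+1)) z ^ 2 * muSeq μ0 K i z)
        ≤ Sq K μ0 x (i+1) - l * (Sq K μ0 x (i+1) * Real.log (Sq K μ0 x (i+1))) := by
      linarith
    exact step2.trans (mul_le_mul_of_nonneg_right h7 hGpos.le)
  have step6 : Sq K μ0 x (i+1)
      ≤ (1 - l * Real.log (Sq K μ0 x (i+1))) * Sq K μ0 x i := by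
    have h1 : Sq K μ0 x (i+1) * Sq K μ0 x (i+1)
        ≤ Sq K μ0 x (i+1) * ((1 - l * Real.log (Sq K μ0 x (i+1))) * Sq K μ0 x i) := by
      nlinarith [step5]
    exact le_of_mul_le_mul_left h1 hFpos
  have hu : 0 < 1 - l * Real.log (Sq K μ0 x (i+1)) := by
    by_contra hcon
    push_neg at hcon
    nlinarith [step6]
  have h1 : Real.log (Sq K μ0 x (i+1))
      ≤ Real.log (1 - l * Real.log (Sq K μ0 x (i+1))) + Real.log (Sq K μ0 x i) := by
    have h8 := Real.log_le_log hFpos step6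
    rwa [Real.log_mul hu.ne' hGpos.ne'] at h8
  have h2 : Real.log (1 - l * Real.log (Sq K μ0 x (i+1)))
      ≤ - (l * Real.log (Sq K μ0 x (i+1))) := by
    have := Real.log_le_sub_one_of_pos hu
    linarith
  nlinarith [h1, h2]

include hK hμ01 hpos in
lemma Astep (n : ℕ) :
    Dq K μ0 x (n+1)
      ≤ sigma1 (K (n+1)) (muSeq μ0 K (n+1)) (muSeq μ0 K n) ^ 2 * Dq K μ0 x n := by
  have hKnn := (hK (n+1) (by omega)).1
  have hKrow := (hK (n+1) (by omega)).2
  set h : V → ℝ := fun y => kd K μ0 x (n+1) y - 1 with hh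
  set g : V → ℝ := fun z => kd K μ0 x n z - 1 with hg
  have h0 : ∑ z, muSeq μ0 K (n+1) z * h z = 0 := by
    have e : ∀ z : V, muSeq μ0 K (n+1) z * h z
        = kd K μ0 x (n+1) z * muSeq μ0 K (n+1) z - muSeq μ0 K (n+1) z := fun z => by
      rw [hh]; ring
    simp_rw [e]
    rw [Finset.sum_sub_distrib, kd_sum K μ0 x hK hpos (n+1),
      muSeq_rowsum K μ0 hK hμ01 (n+1)]
    ring
  have claim2 : Dq K μ0 x (n+1)
      = ∑ z, mulKF (K (n+1)) h z * g z * muSeq μ0 K n z := by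
    unfold Dq
    calc ∑ y, (kd K μ0 x (n+1) y - 1) ^ 2 * muSeq μ0 K (n+1) y
        = ∑ y, h y * (kd K μ0 x (n+1) y * muSeq μ0 K (n+1) y - muSeq μ0 K (n+1) y) :=
          Finset.sum_congr rfl fun y _ => by rw [hh]; ring
      _ = ∑ y, h y * (∑ z, g z * muSeq μ0 K n z * K (n+1) z y) := by
          refine Finset.sum_congr rfl fun y _ => ?_
          congr 1
          rw [kd_rec K μ0 x hpos n y]
          have e2 : muSeq μ0 K (n+1) y = ∑ z, muSeq μ0 K n z * K (n+1) z y := rfl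
          rw [e2, ← Finset.sum_sub_distrib]
          exact Finset.sum_congr rfl fun z _ => by rw [hg]; ring
      _ = ∑ z, ∑ y, h y * (g z * muSeq μ0 K n z * K (n+1) z y) := by
          simp_rw [Finset.mul_sum]; exact Finset.sum_comm
      _ = ∑ z, mulKF (K (n+1)) h z * g z * muSeq μ0 K n z := by
          refine Finset.sum_congr rfl fun z _ => ?_
          unfold mulKF
          rw [Finset.sum_mul, Finset.sum_mul]
          exact Finset.sum_congr rfl fun y _ => by ring
  have claim3 : Dq K μ0 x (n+1) ^ 2
      ≤ (∑ z, mulKF (K (n+1)) h z ^ 2 * muSeq μ0 K n z) * Dq K μ0 x n := by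
    have hcs := cs_weighted (muSeq μ0 K n) (mulKF (K (n+1)) h) g (fun z => (hpos n z).le)
    rw [← claim2] at hcs
    have e3 : ∑ z, g z ^ 2 * muSeq μ0 K n z = Dq K μ0 x n := rfl
    rw [e3] at hcs
    exact hcs
  have claim4 : ∑ z, mulKF (K (n+1)) h z ^ 2 * muSeq μ0 K n z
      ≤ sigma1 (K (n+1)) (muSeq μ0 K (n+1)) (muSeq μ0 K n) ^ 2 * Dq K μ0 x (n+1) := by
    have h9 := sigma1_sq_bound (K (n+1)) (muSeq μ0 K (n+1)) (muSeq μ0 K n)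
      (hpos (n+1)) (fun z => (hpos n z).le) hKnn hKrow h h0
    have e4 : ∑ z, h z ^ 2 * muSeq μ0 K (n+1) z = Dq K μ0 x (n+1) := rfl
    rw [e4] at h9
    exact h9
  have hσnn := sigma1_nonneg (K (n+1)) (muSeq μ0 K (n+1)) (muSeq μ0 K n)
    (hpos (n+1)) (fun z => (hpos n z).le) hKnn hKrow
  have hDnn : 0 ≤ Dq K μ0 x n := Dq_nonneg K μ0 x hpos n
  have hDnn1 : 0 ≤ Dq K μ0 x (n+1) := Dq_nonneg K μ0 x hpos (n+1)
  rcases hDnn1.eq_or_lt with h'|h'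
  · rw [← h']
    exact mul_nonneg (sq_nonneg _) hDnn
  · have h10 := claim3.trans (mul_le_mul_of_nonneg_right claim4 hDnn)
    nlinarith [h10, h']

end Main

/-- Theorem 4.5 of the paper: if `m` satisfies
`∑_{i=1}^m log(1+l(P_i)) ≥ log log (μ_0(x)^{-1/2})`, then for all `n ≥ m`,
`d₂(K_{0,n}(x,·),μ_n)² ≤ e² ∏_{i=m+1}^n σ₁(K_i,μ_{i-1})²`. -/
theorem stmt14 {V : Type*} [Fintype V] [DecidableEq V]
    (K : ℕ → V → V → ℝ) (μ0 : V → ℝ)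
    (hK : ∀ i, 1 ≤ i → IsKernel (K i))
    (hμ0pos : ∀ x, 0 < μ0 x) (hμ01 : ∑ x, μ0 x = 1)
    (hpos : ∀ n x, 0 < muSeq μ0 K n x)
    (x : V) (m : ℕ)
    (hm : Real.log (Real.log (μ0 x ^ (-(1 : ℝ) / 2))) ≤
      ∑ i ∈ Finset.Icc 1 m,
        Real.log (1 + lsConst (Pker (K i) (muSeq μ0 K (i - 1)) (muSeq μ0 K i))
          (muSeq μ0 K i))) :
    ∀ n : ℕ, m ≤ n →
      d2 (fun y => Kseg K 0 n x y) (muSeq μ0 K n) ^ (2 : ℕ) ≤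
        Real.exp 1 ^ (2 : ℕ) *
          ∏ i ∈ Finset.Icc (m + 1) n,
            sigma1 (K i) (muSeq μ0 K i) (muSeq μ0 K (i - 1)) ^ (2 : ℕ) := by
  intro n hn
  have hlnn : ∀ i : ℕ, 0 ≤ lsConst
      (Pker (K (i+1)) (muSeq μ0 K i) (muSeq μ0 K (i+1))) (muSeq μ0 K (i+1)) := by
    intro i
    exact lsConst_nonneg _ _ (hpos (i+1)) (muSeq_rowsum K μ0 hK hμ01 (i+1))
      (Pker_nonneg _ _ _ (hK (i+1) (by omega)).1 (fun z => (hpos i z).le) (hpos (i+1)))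
  have hlnn' : ∀ i : ℕ, 1 ≤ i → 0 ≤ lsConst
      (Pker (K i) (muSeq μ0 K (i-1)) (muSeq μ0 K i)) (muSeq μ0 K i) := by
    intro i hi
    obtain ⟨j, rfl⟩ : ∃ j, i = j + 1 := ⟨i - 1, by omega⟩
    simpa only [Nat.add_sub_cancel] using hlnn j
  have htel : ∀ j : ℕ, Real.log (Sq K μ0 x j)
      * ∏ i ∈ Finset.Icc 1 j,
          (1 + lsConst (Pker (K i) (muSeq μ0 K (i-1)) (muSeq μ0 K i)) (muSeq μ0 K i))
      ≤ Real.log (Sq K μ0 x 0) := by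
    intro j
    induction j with
    | zero => simp
    | succ j ih =>
      rw [Finset.prod_Icc_succ_top (Nat.le_add_left 1 j)]
      have hprodnn : 0 ≤ ∏ i ∈ Finset.Icc 1 j,
          (1 + lsConst (Pker (K i) (muSeq μ0 K (i-1)) (muSeq μ0 K i)) (muSeq μ0 K i)) := by
        refine Finset.prod_nonneg fun i hi => ?_
        have := hlnn' i (Finset.mem_Icc.1 hi).1
        linarith
      have hstep : (1 + lsConst (Pker (K (j+1)) (muSeq μ0 K ((j+1)-1)) (muSeq μ0 K (j+1)))
            (muSeq μ0 K (j+1))) * Real.log (Sq K μ0 x (j+1)) ≤ Real.log (Sq K μ0 x j) := by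
        simpa only [Nat.add_sub_cancel] using Bstep K μ0 x hK hμ01 hpos j
      calc Real.log (Sq K μ0 x (j+1))
            * ((∏ i ∈ Finset.Icc 1 j,
                (1 + lsConst (Pker (K i) (muSeq μ0 K (i-1)) (muSeq μ0 K i)) (muSeq μ0 K i)))
              * (1 + lsConst (Pker (K (j+1)) (muSeq μ0 K ((j+1)-1)) (muSeq μ0 K (j+1)))
                  (muSeq μ0 K (j+1))))
          = ((1 + lsConst (Pker (K (j+1)) (muSeq μ0 K ((j+1)-1)) (muSeq μ0 K (j+1)))
                  (muSeq μ0 K (j+1))) * Real.log (Sq K μ0 x (j+1)))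
              * ∏ i ∈ Finset.Icc 1 j,
                (1 + lsConst (Pker (K i) (muSeq μ0 K (i-1)) (muSeq μ0 K i)) (muSeq μ0 K i)) := by
            ring
        _ ≤ Real.log (Sq K μ0 x j) * ∏ i ∈ Finset.Icc 1 j,
              (1 + lsConst (Pker (K i) (muSeq μ0 K (i-1)) (muSeq μ0 K i)) (muSeq μ0 K i)) :=
            mul_le_mul_of_nonneg_right hstep hprodnn
        _ ≤ Real.log (Sq K μ0 x 0) := ih
  have hlogm0 : 0 ≤ Real.log (Sq K μ0 x m) :=
    Real.log_nonneg (Sq_ge_one K μ0 x hK hμ01 hpos m)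
  have hSm_le : Real.log (Sq K μ0 x m) ≤ 2 := by
    have h1 := htel m
    have hP1 : 1 ≤ ∏ i ∈ Finset.Icc 1 m,
        (1 + lsConst (Pker (K i) (muSeq μ0 K (i-1)) (muSeq μ0 K i)) (muSeq μ0 K i)) := by
      have hpp := Finset.prod_le_prod (s := Finset.Icc 1 m) (f := fun _ => (1:ℝ))
        (g := fun i => 1 + lsConst (Pker (K i) (muSeq μ0 K (i-1)) (muSeq μ0 K i)) (muSeq μ0 K i))
        (fun i _ => zero_le_one)
        (fun i hi => by have := hlnn' i (Finset.mem_Icc.1 hi).1; linarith)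
      simpa using hpp
    have hmrw : Real.log (μ0 x ^ (-(1:ℝ)/2)) = Real.log (Sq K μ0 x 0) / 2 := by
      rw [Real.log_rpow (hμ0pos x), Sq_zero K μ0 x hpos, one_div, Real.log_inv]
      ring
    rw [hmrw] at hm
    by_cases hc : Real.log (Sq K μ0 x 0) ≤ 2
    · nlinarith [le_mul_of_one_le_right hlogm0 hP1, h1]
    · push_neg at hc
      have hpos2 : (0:ℝ) < Real.log (Sq K μ0 x 0) / 2 := by linarith
      have hexp : Real.exp (∑ i ∈ Finset.Icc 1 m,
            Real.log (1 + lsConst (Pker (K i) (muSeq μ0 K (i-1)) (muSeq μ0 K i)) (muSeq μ0 K i)))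
          = ∏ i ∈ Finset.Icc 1 m,
            (1 + lsConst (Pker (K i) (muSeq μ0 K (i-1)) (muSeq μ0 K i)) (muSeq μ0 K i)) := by
        rw [Real.exp_sum]
        refine Finset.prod_congr rfl fun i hi => ?_
        have := hlnn' i (Finset.mem_Icc.1 hi).1
        exact Real.exp_log (by linarith)
      have h3 : Real.log (Sq K μ0 x 0) / 2 ≤ ∏ i ∈ Finset.Icc 1 m,
          (1 + lsConst (Pker (K i) (muSeq μ0 K (i-1)) (muSeq μ0 K i)) (muSeq μ0 K i)) := by
        calc Real.log (Sq K μ0 x 0) / 2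
            = Real.exp (Real.log (Real.log (Sq K μ0 x 0) / 2)) := (Real.exp_log hpos2).symm
          _ ≤ Real.exp (∑ i ∈ Finset.Icc 1 m,
              Real.log (1 + lsConst (Pker (K i) (muSeq μ0 K (i-1)) (muSeq μ0 K i))
                (muSeq μ0 K i))) := Real.exp_le_exp.2 hm
          _ = _ := hexp
      nlinarith [mul_le_mul_of_nonneg_left h3 hlogm0, h1]
  have hDm : Dq K μ0 x m ≤ Real.exp 1 ^ 2 - 1 := by
    rw [Dq_eq K μ0 x hK hμ01 hpos m]
    have hSm : Sq K μ0 x m ≤ Real.exp 2 := by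
      calc Sq K μ0 x m = Real.exp (Real.log (Sq K μ0 x m)) :=
            (Real.exp_log (Sq_pos K μ0 x hK hμ01 hpos m)).symm
        _ ≤ Real.exp 2 := Real.exp_le_exp.2 hSm_le
    have he : Real.exp 1 ^ 2 = Real.exp 2 := by
      rw [sq, ← Real.exp_add]; norm_num
    rw [he]
    linarith
  have hchain : Dq K μ0 x n ≤ Dq K μ0 x m
      * ∏ i ∈ Finset.Icc (m+1) n, sigma1 (K i) (muSeq μ0 K i) (muSeq μ0 K (i-1)) ^ 2 := by
    refine Nat.le_induction ?_ ?_ n hn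
    · rw [Finset.Icc_eq_empty (by omega : ¬ m + 1 ≤ m), Finset.prod_empty, mul_one]
    · intro n hmn ih
      rw [Finset.prod_Icc_succ_top (by omega : m + 1 ≤ n + 1)]
      simp only [Nat.add_sub_cancel]
      calc Dq K μ0 x (n+1)
          ≤ sigma1 (K (n+1)) (muSeq μ0 K (n+1)) (muSeq μ0 K n) ^ 2 * Dq K μ0 x n :=
            Astep K μ0 x hK hμ01 hpos n
        _ ≤ sigma1 (K (n+1)) (muSeq μ0 K (n+1)) (muSeq μ0 K n) ^ 2
            * (Dq K μ0 x m * ∏ i ∈ Finset.Icc (m+1) n,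
                sigma1 (K i) (muSeq μ0 K i) (muSeq μ0 K (i-1)) ^ 2) :=
            mul_le_mul_of_nonneg_left ih (sq_nonneg _)
        _ = Dq K μ0 x m * ((∏ i ∈ Finset.Icc (m+1) n,
              sigma1 (K i) (muSeq μ0 K i) (muSeq μ0 K (i-1)) ^ 2)
            * sigma1 (K (n+1)) (muSeq μ0 K (n+1)) (muSeq μ0 K n) ^ 2) := by ring
  have hd2 : d2 (fun y => Kseg K 0 n x y) (muSeq μ0 K n) ^ (2:ℕ) = Dq K μ0 x n := by
    rw [d2_sq _ _ (fun y => (hpos n y).le)]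
    rfl
  rw [hd2]
  have hprodnn : 0 ≤ ∏ i ∈ Finset.Icc (m+1) n,
      sigma1 (K i) (muSeq μ0 K i) (muSeq μ0 K (i-1)) ^ 2 :=
    Finset.prod_nonneg fun i _ => sq_nonneg _
  calc Dq K μ0 x n ≤ Dq K μ0 x m
        * ∏ i ∈ Finset.Icc (m+1) n, sigma1 (K i) (muSeq μ0 K i) (muSeq μ0 K (i-1)) ^ 2 := hchain
    _ ≤ Real.exp 1 ^ (2:ℕ) * ∏ i ∈ Finset.Icc (m+1) n,
          sigma1 (K i) (muSeq μ0 K i) (muSeq μ0 K (i-1)) ^ 2 :=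
        mul_le_mul_of_nonneg_right (by linarith) hprodnn

end TimeInhomog
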